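/- The probability p_0 = 3·∫_0^1 ∫_0^1 (1-a)^3/(3 - (1-a)(2-b)) db da equals (189/8)·ln 3 - 26·ln 2 - 15/2. -/

import Mathlib

/-!
For fixed `a`, the denominator `3 - (1 - a) * (2 - b) = (1 + 2 * a) + (1 - a) * b` is affine in `b`,
so the inner integral is `(1 - a) ^ 2 * (log (2 + a) - log (1 + 2 * a))`. The outer integral of this
has an elementary primitive, obtained by integrating by parts.
-/

open MeasureTheory Real

lemma integral_div_add_mul_eq_log_sub {p q : ℝ} (hp : 0 < p) (hpq : 0 < p + q) :
    ∫ x in (0:ℝ)..1, q / (p + q * x) = log (p + q) - log p := by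
  have hpos : ∀ x ∈ Set.uIcc (0:ℝ) 1, 0 < p + q * x := by
    intro x hx
    rw [Set.uIcc_of_le zero_le_one] at hx
    rcases le_total 0 q with hq | hq <;> nlinarith [hx.1, hx.2]
  have hderiv : ∀ x ∈ Set.uIcc (0:ℝ) 1,
      HasDerivAt (fun x => log (p + q * x)) (q / (p + q * x)) x := by
    intro x hx
    simpa using ((hasDerivAt_id x).const_mul q |>.const_add p).log (hpos x hx).ne'
  have hint : IntervalIntegrable (fun x => q / (p + q * x)) volume 0 1 :=
    ContinuousOn.intervalIntegrable <|
      continuousOn_const.div (by fun_prop) fun x hx => (hpos x hx).ne'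
  rw [intervalIntegral.integral_eq_sub_of_hasDerivAt hderiv hint]
  simp

lemma integral_stit_inner {a : ℝ} (ha : 0 < 1 + 2 * a) :
    ∫ b in (0:ℝ)..1, (1 - a) ^ 3 / (3 - (1 - a) * (2 - b))
      = (1 - a) ^ 2 * (log (2 + a) - log (1 + 2 * a)) := by
  have hform : (fun b : ℝ => (1 - a) ^ 3 / (3 - (1 - a) * (2 - b)))
      = fun b => (1 - a) ^ 2 * ((1 - a) / ((1 + 2 * a) + (1 - a) * b)) := by
    funext b
    rw [show 3 - (1 - a) * (2 - b) = (1 + 2 * a) + (1 - a) * b by ring]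
    ring
  rw [hform, intervalIntegral.integral_const_mul,
    integral_div_add_mul_eq_log_sub (by linarith) (by linarith)]
  ring_nf

/-- Comes from integrating by parts against `-(1 - a) ^ 3 / 3`, shifted by the constants `9` and
`9 / 8` that make the cubic factors vanish at the zeros of `2 + a` and `1 + 2 * a`:
`9 - (1 - a) ^ 3 / 3 = (2 + a) * (a ^ 2 - 5 * a + 13) / 3` and
`(1 - a) ^ 3 / 3 - 9 / 8 = (1 + 2 * a) * (-4 * a ^ 2 + 14 * a - 19) / 24`,
so the remaining integrals are of polynomials. -/
noncomputable def stitPrimitive (a : ℝ) : ℝ :=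
  (9 - (1 - a) ^ 3 / 3) * log (2 + a) + ((1 - a) ^ 3 / 3 - 9 / 8) * log (1 + 2 * a)
    - 191 / 16 - 11 / 4 * a + a ^ 2 / 4

lemma hasDerivAt_stitPrimitive {a : ℝ} (ha : 0 < 1 + 2 * a) :
    HasDerivAt stitPrimitive ((1 - a) ^ 2 * (log (2 + a) - log (1 + 2 * a))) a := by
  have h2a : 2 + a ≠ 0 := by linarith
  have h12a : 1 + 2 * a ≠ 0 := ha.ne'
  have hcube : HasDerivAt (fun x => (1 - x) ^ 3 / 3) (3 * (1 - a) ^ 2 * -1 / 3) a :=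
    ((hasDerivAt_id a).const_sub 1).pow 3 |>.div_const 3
  have hlog₁ := ((hasDerivAt_id a).const_add 2).log h2a
  have hlog₂ := (((hasDerivAt_id a).const_mul 2).const_add 1).log h12a
  have hpoly := (((hasDerivAt_id a).const_mul (11 / 4)).const_sub (-191 / 16)).add
    (((hasDerivAt_id a).pow 2).div_const 4)
  refine (((hcube.const_sub 9).mul hlog₁).add
    ((hcube.sub_const (9 / 8)).mul hlog₂) |>.add hpoly).congr_deriv ?_ |>.congr_of_eventuallyEq ?_
  · simp only [id, Nat.cast_ofNat]
    linear_combination (a ^ 2 - 5 * a + 13) / 3 * mul_inv_cancel₀ h2a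
      + (-4 * a ^ 2 + 14 * a - 19) / 12 * mul_inv_cancel₀ h12a
  · filter_upwards with x
    simp only [stitPrimitive, id, Pi.add_apply, Pi.mul_apply, Pi.pow_apply]
    ring

lemma integral_stit_outer :
    ∫ a in (0:ℝ)..1, (1 - a) ^ 2 * (log (2 + a) - log (1 + 2 * a))
      = 63 / 8 * log 3 - 26 / 3 * log 2 - 5 / 2 := by
  have hpos : ∀ a ∈ Set.uIcc (0:ℝ) 1, 0 < 1 + 2 * a := by
    intro a ha
    rw [Set.uIcc_of_le zero_le_one] at ha
    linarith [ha.1]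
  have hint : IntervalIntegrable
      (fun a => (1 - a) ^ 2 * (log (2 + a) - log (1 + 2 * a))) volume 0 1 := by
    refine ContinuousOn.intervalIntegrable ?_
    have h2a : ∀ a ∈ Set.uIcc (0:ℝ) 1, 2 + a ≠ 0 := fun a ha => by linarith [hpos a ha]
    have h12a : ∀ a ∈ Set.uIcc (0:ℝ) 1, 1 + 2 * a ≠ 0 := fun a ha => (hpos a ha).ne'
    fun_prop (disch := assumption)
  rw [intervalIntegral.integral_eq_sub_of_hasDerivAt
    (fun a ha => hasDerivAt_stitPrimitive (hpos a ha)) hint]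
  norm_num [stitPrimitive]
  ring

theorem stit_p0_value :
    3 * (∫ a in (0:ℝ)..1, ∫ b in (0:ℝ)..1, (1 - a) ^ 3 / (3 - (1 - a) * (2 - b))) =
      (189 / 8) * Real.log 3 - 26 * Real.log 2 - 15 / 2 := by
  have hinner : ∀ a ∈ Set.uIcc (0:ℝ) 1,
      (∫ b in (0:ℝ)..1, (1 - a) ^ 3 / (3 - (1 - a) * (2 - b)))
        = (1 - a) ^ 2 * (log (2 + a) - log (1 + 2 * a)) := by
    intro a ha
    rw [Set.uIcc_of_le zero_le_one] at ha
    exact integral_stit_inner (by linarith [ha.1])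
  rw [intervalIntegral.integral_congr hinner, integral_stit_outer]
  ring
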